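/- Let f : ℝ^d → ℝ be twice continuously differentiable with L1-Lipschitz gradient and L2-Lipschitz Hessian, let α ≥ 0, and let x₀ ∈ ℝ^d satisfy λ_min(∇²f(x₀)) ≥ −α. Define g(x) = f(x) + L1·([‖x − x₀‖ − α/L2]_+)². Then g is 3α-almost convex, i.e. g(y) ≥ g(x) + ⟨∇g(x), y − x⟩ − (3α/2)·‖y − x‖² for all x, y, and g is 5·L1-smooth, i.e. ‖∇g(x) − ∇g(y)‖ ≤ 5·L1·‖x − y‖ for all x, y. -/

import Mathlib

/-!
The penalty is `L1 · dist(z - x₀, B)²` for the ball `B = closedBall 0 (α / L2)`, with gradient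
`2 L1 (I - P)(z - x₀)` where `P` is the nearest-point projection onto `B`. Both `P` and `I - P`
are firmly nonexpansive, so the penalty gradient is monotone and `2 L1`-Lipschitz, which gives
smoothness. For almost convexity it suffices that `∇g` is `3α`-almost monotone. Integrating the
Hessian bound `-(α + L2 ‖x - x₀‖)` along `[a, b]` gives
`⟪∇f b - ∇f a, b - a⟫ ≥ -(α + L2 (‖a - x₀‖ + ‖b - x₀‖) / 2) ‖b - a‖²`, which is enough when
`‖a - x₀‖ + ‖b - x₀‖ ≤ 4α / L2`, the penalty only helping. Otherwise `I - P` is even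
`1/2`-strongly monotone on the pair, and `2 L1 · 1/2` compensates the curvature `≥ -L1` of `f`.
-/

open Set
open scoped RealInnerProductSpace

variable {E : Type*} [NormedAddCommGroup E] [InnerProductSpace ℝ E]

theorem add_div_two_le_sub_of_hasDerivAt {φ φ' : ℝ → ℝ} {p q : ℝ}
    (hφ : ∀ t, HasDerivAt φ (φ' t) t) (hle : ∀ t ∈ Ioo (0 : ℝ) 1, p + q * t ≤ φ' t) :
    p + q / 2 ≤ φ 1 - φ 0 := by
  have hpoly : ∀ t, HasDerivAt (fun s : ℝ => p * s + q / 2 * s ^ 2) (p + q * t) t := fun t =>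
    (((hasDerivAt_id' t).const_mul p).fun_add ((hasDerivAt_pow 2 t).const_mul (q / 2))).congr_deriv
      (by push_cast; ring)
  have hF : ∀ t, HasDerivAt (fun s => φ s - (p * s + q / 2 * s ^ 2)) (φ' t - (p + q * t)) t :=
    fun t => (hφ t).sub (hpoly t)
  have hmono : MonotoneOn (fun s => φ s - (p * s + q / 2 * s ^ 2)) (Icc 0 1) := by
    refine monotoneOn_of_hasDerivWithinAt_nonneg (convex_Icc 0 1)
      (fun t _ => (hF t).continuousAt.continuousWithinAt) (fun t _ => (hF t).hasDerivWithinAt)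
      (fun t ht => ?_)
    rw [interior_Icc] at ht
    linarith [hle t ht]
  have := hmono (left_mem_Icc.2 zero_le_one) (right_mem_Icc.2 zero_le_one) zero_le_one
  simp only at this
  linarith

theorem hasDerivAt_comp_add_smul {F : Type*} [NormedAddCommGroup F] [NormedSpace ℝ F]
    {φ : E → F} {φ' : E →L[ℝ] F} {a v : E} {t : ℝ} (h : HasFDerivAt φ φ' (a + t • v)) :
    HasDerivAt (fun s : ℝ => φ (a + s • v)) (φ' v) t := by
  have hline : HasDerivAt (fun s : ℝ => a + s • v) v t := by
    simpa using ((hasDerivAt_id t).smul_const v).const_add a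
  exact h.comp_hasDerivAt t hline

theorem add_mul_inner_nonpos {x y : E} {p q : ℝ} (hpos : p + q * (‖x‖ * ‖y‖) ≤ 0)
    (hneg : p - q * (‖x‖ * ‖y‖) ≤ 0) : p + q * ⟪x, y⟫ ≤ 0 := by
  have h := abs_le.1 (abs_real_inner_le_norm x y)
  rcases le_total 0 q with hq | hq
  · nlinarith [mul_le_mul_of_nonneg_left h.2 hq]
  · nlinarith [mul_le_mul_of_nonpos_left h.1 hq]

theorem norm_le_of_norm_sq_le_inner {u v : E} (h : ‖u‖ ^ 2 ≤ ⟪u, v⟫) : ‖u‖ ≤ ‖v‖ := by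
  nlinarith [real_inner_le_norm u v, norm_nonneg u, norm_nonneg v]

theorem norm_sub_sq_le_inner_sub_of_norm_sq_le_inner {u v : E} (h : ‖u‖ ^ 2 ≤ ⟪u, v⟫) :
    ‖v - u‖ ^ 2 ≤ ⟪v - u, v⟫ := by
  rw [norm_sub_sq_real, inner_sub_left, real_inner_self_eq_norm_sq, real_inner_comm]
  linarith

theorem norm_sub_sq_le_inner_of_forall_inner_sub_nonpos {s : Set E} {P : E → E}
    (hPs : ∀ x, P x ∈ s) (hP : ∀ x, ∀ p ∈ s, ⟪x - P x, p - P x⟫ ≤ 0) (x y : E) :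
    ‖P x - P y‖ ^ 2 ≤ ⟪P x - P y, x - y⟫ := by
  have hx := hP x (P y) (hPs y)
  have hy := hP y (P x) (hPs x)
  have key : ⟪P x - P y, x - y⟫ - ‖P x - P y‖ ^ 2
      = -⟪x - P x, P y - P x⟫ - ⟪y - P y, P x - P y⟫ := by
    rw [← real_inner_self_eq_norm_sq]
    simp only [inner_sub_left, inner_sub_right, real_inner_comm (P x) x, real_inner_comm (P y) x,
      real_inner_comm (P x) y, real_inner_comm (P y) y, real_inner_comm (P y) (P x)]
    ring
  linarith

theorem two_mul_min_sub_min_mul_sub_le {r s c : ℝ} (hr : 0 ≤ r) (hs : 0 ≤ s)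
    (h : 4 * c ≤ r + s) : 2 * ((min r c - min s c) * (r - s)) ≤ (r - s) ^ 2 := by
  rcases le_total r c with hrc | hrc <;> rcases le_total s c with hsc | hsc <;>
    simp only [min_eq_left, min_eq_right, hrc, hsc] <;> nlinarith

theorem min_one_div_mul_self {c r : ℝ} (hc : 0 ≤ c) (hr : 0 ≤ r) :
    min 1 (c / r) * r = min r c := by
  rcases hr.eq_or_lt with h | h
  · simp [← h, hc]
  · rw [min_mul_of_nonneg _ _ h.le, one_mul, div_mul_cancel₀ _ h.ne']

/-- The nearest-point projection onto `Metric.closedBall 0 c`, for `0 ≤ c`. -/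
noncomputable def projBall (c : ℝ) (x : E) : E := min 1 (c / ‖x‖) • x

section projBall

variable {c : ℝ}

theorem norm_projBall (hc : 0 ≤ c) (x : E) : ‖projBall c x‖ = min ‖x‖ c := by
  rw [projBall, norm_smul, Real.norm_of_nonneg (le_min zero_le_one (by positivity)),
    min_one_div_mul_self hc (norm_nonneg x)]

theorem norm_sub_projBall (hc : 0 ≤ c) (x : E) : ‖x - projBall c x‖ = max (‖x‖ - c) 0 := by
  have hsub : x - min 1 (c / ‖x‖) • x = (1 - min 1 (c / ‖x‖)) • x := by rw [sub_smul, one_smul]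
  rw [projBall, hsub, norm_smul, Real.norm_of_nonneg (sub_nonneg.2 (min_le_left _ _)),
    sub_mul, one_mul, min_one_div_mul_self hc (norm_nonneg x)]
  rcases le_total ‖x‖ c with h | h <;> simp [h]

theorem inner_sub_projBall_nonpos (hc : 0 ≤ c) (x : E) {p : E} (hp : ‖p‖ ≤ c) :
    ⟪x - projBall c x, p - projBall c x⟫ ≤ 0 := by
  unfold projBall
  set s := min 1 (c / ‖x‖)
  have hs : s * ‖x‖ = min ‖x‖ c := min_one_div_mul_self hc (norm_nonneg x)
  have hs1 : 0 ≤ 1 - s := sub_nonneg.2 (min_le_left _ _)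
  have hxp : ⟪x, p⟫ ≤ ‖x‖ * c :=
    (real_inner_le_norm x p).trans (mul_le_mul_of_nonneg_left hp (norm_nonneg x))
  calc ⟪x - s • x, p - s • x⟫ = (1 - s) * (⟪x, p⟫ - s * ‖x‖ ^ 2) := by
        simp only [inner_sub_left, inner_sub_right, real_inner_smul_left,
          real_inner_smul_right, real_inner_self_eq_norm_sq, norm_smul, Real.norm_eq_abs, mul_pow,
          sq_abs]
        ring
    _ ≤ (1 - s) * (‖x‖ * c - s * ‖x‖ ^ 2) := by gcongr
    _ = (‖x‖ - min ‖x‖ c) * (c - min ‖x‖ c) := by rw [← hs]; ring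
    _ = 0 := by rcases le_total ‖x‖ c with h | h <;> simp [h]

theorem norm_sub_projBall_sub_sq_le (hc : 0 ≤ c) (x y : E) :
    ‖(x - projBall c x) - (y - projBall c y)‖ ^ 2
      ≤ ⟪(x - projBall c x) - (y - projBall c y), x - y⟫ := by
  have hP := norm_sub_sq_le_inner_of_forall_inner_sub_nonpos (s := Metric.closedBall 0 c)
    (fun x => by simp [norm_projBall hc])
    (fun x p hp => inner_sub_projBall_nonpos hc x (by simpa using hp)) x y
  rw [sub_sub_sub_comm]
  exact norm_sub_sq_le_inner_sub_of_norm_sq_le_inner hP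

theorem norm_sub_projBall_sub_le (hc : 0 ≤ c) (x y : E) :
    ‖(x - projBall c x) - (y - projBall c y)‖ ≤ ‖x - y‖ :=
  norm_le_of_norm_sq_le_inner (norm_sub_projBall_sub_sq_le hc x y)

theorem inner_sub_projBall_sub_nonneg (hc : 0 ≤ c) (x y : E) :
    0 ≤ ⟪(x - projBall c x) - (y - projBall c y), x - y⟫ :=
  (sq_nonneg _).trans (norm_sub_projBall_sub_sq_le hc x y)

theorem norm_sub_sq_div_two_le_inner_sub_projBall_sub (hc : 0 ≤ c) {x y : E}
    (h : 4 * c ≤ ‖x‖ + ‖y‖) :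
    ‖x - y‖ ^ 2 / 2 ≤ ⟪(x - projBall c x) - (y - projBall c y), x - y⟫ := by
  unfold projBall
  set sx := min 1 (c / ‖x‖)
  set sy := min 1 (c / ‖y‖)
  have hsx : sx * ‖x‖ = min ‖x‖ c := min_one_div_mul_self hc (norm_nonneg x)
  have hsy : sy * ‖y‖ = min ‖y‖ c := min_one_div_mul_self hc (norm_nonneg y)
  have hexpand : ‖x - y‖ ^ 2 - 2 * ⟪(x - sx • x) - (y - sy • y), x - y⟫
      = (2 * (min ‖x‖ c * ‖x‖ + min ‖y‖ c * ‖y‖) - ‖x‖ ^ 2 - ‖y‖ ^ 2)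
        + 2 * (1 - sx - sy) * ⟪x, y⟫ := by
    simp only [norm_sub_sq_real, inner_sub_left, inner_sub_right, real_inner_smul_left,
      real_inner_self_eq_norm_sq, real_inner_comm x y]
    rw [← hsx, ← hsy]
    ring
  -- The expansion is affine in `⟪x, y⟫`; check it at the extreme values `±‖x‖ * ‖y‖`.
  have hpos := two_mul_min_sub_min_mul_sub_le (norm_nonneg x) (norm_nonneg y) h
  have hneg : min ‖x‖ c + min ‖y‖ c ≤ 2 * c := by linarith [min_le_right ‖x‖ c, min_le_right ‖y‖ c]
  have := add_mul_inner_nonpos (x := x) (y := y)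
    (p := 2 * (min ‖x‖ c * ‖x‖ + min ‖y‖ c * ‖y‖) - ‖x‖ ^ 2 - ‖y‖ ^ 2) (q := 2 * (1 - sx - sy))
    (by rw [← hsx, ← hsy] at hpos ⊢; nlinarith)
    (by nlinarith [norm_nonneg x, norm_nonneg y])
  linarith

end projBall

theorem abs_norm_sub_projBall_sq_sub_le {c : ℝ} (hc : 0 ≤ c) (x y : E) :
    |‖y - projBall c y‖ ^ 2 - ‖x - projBall c x‖ ^ 2 - 2 * ⟪x - projBall c x, y - x⟫|
      ≤ ‖y - x‖ ^ 2 := by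
  have upper : ∀ x y : E, ‖y - projBall c y‖ ^ 2
      ≤ ‖x - projBall c x‖ ^ 2 + 2 * ⟪x - projBall c x, y - x⟫ + ‖y - x‖ ^ 2 := by
    intro x y
    -- `‖y - projBall c y‖` is the distance from `y` to the ball, which contains `projBall c x`.
    have hle : ‖y - projBall c y‖ ≤ ‖y - projBall c x‖ := by
      rw [norm_sub_projBall hc]
      refine max_le ?_ (norm_nonneg _)
      linarith [norm_le_norm_add_norm_sub' y (projBall c x), norm_projBall hc x,
        min_le_right ‖x‖ c, norm_sub_rev y (projBall c x)]
    have heq : y - projBall c x = (x - projBall c x) + (y - x) := by abel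
    have hsq := pow_le_pow_left₀ (norm_nonneg _) hle 2
    rw [heq, norm_add_sq_real] at hsq
    linarith
  rw [abs_le]
  constructor
  · have hmono := inner_sub_projBall_sub_nonneg hc y x
    have hxy := upper y x
    have hswap : ⟪y - projBall c y, x - y⟫ = -⟪y - projBall c y, y - x⟫ := by
      rw [← inner_neg_right, neg_sub]
    rw [inner_sub_left] at hmono
    rw [norm_sub_rev x y] at hxy
    linarith
  · linarith [upper x y]

theorem neg_mul_sq_le_inner_apply_of_unit {T : E →L[ℝ] E} {α : ℝ}
    (h : ∀ u, ‖u‖ = 1 → ⟪T u, u⟫ ≥ -α) (u : E) : -α * ‖u‖ ^ 2 ≤ ⟪T u, u⟫ := by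
  rcases eq_or_ne u 0 with rfl | hu
  · simp
  have hpos : 0 < ‖u‖ := norm_pos_iff.2 hu
  have h1 := h (‖u‖⁻¹ • u) (by rw [norm_smul, norm_inv, norm_norm, inv_mul_cancel₀ hpos.ne'])
  rw [map_smul, real_inner_smul_left, real_inner_smul_right, ← mul_assoc, ← sq] at h1
  have := mul_le_mul_of_nonneg_left h1 (sq_nonneg ‖u‖)
  rw [← mul_assoc, inv_pow, mul_inv_cancel₀ (pow_ne_zero 2 hpos.ne'), one_mul] at this
  linarith

theorem neg_add_mul_sq_le_inner_apply {T T₀ : E →L[ℝ] E} {α δ : ℝ}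
    (h₀ : ∀ u, -α * ‖u‖ ^ 2 ≤ ⟪T₀ u, u⟫) (hT : ‖T - T₀‖ ≤ δ) (u : E) :
    -(α + δ) * ‖u‖ ^ 2 ≤ ⟪T u, u⟫ := by
  have hdiff : |⟪(T - T₀) u, u⟫| ≤ δ * ‖u‖ ^ 2 :=
    calc |⟪(T - T₀) u, u⟫| ≤ ‖(T - T₀) u‖ * ‖u‖ := abs_real_inner_le_norm _ _
      _ ≤ ‖T - T₀‖ * ‖u‖ * ‖u‖ := by gcongr; exact (T - T₀).le_opNorm u
      _ ≤ δ * ‖u‖ ^ 2 := by rw [mul_assoc, ← sq]; gcongr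
  rw [sub_apply, inner_sub_left] at hdiff
  linarith [h₀ u, (abs_le.1 hdiff).1]

theorem neg_mul_sq_le_inner_sub_of_norm_sub_le {G : E → E} {L : ℝ} {a b : E}
    (h : ‖G b - G a‖ ≤ L * ‖b - a‖) : -L * ‖b - a‖ ^ 2 ≤ ⟪G b - G a, b - a⟫ := by
  have hcs := (abs_le.1 (abs_real_inner_le_norm (G b - G a) (b - a))).1
  nlinarith [mul_le_mul_of_nonneg_right h (norm_nonneg (b - a))]

section Gradient

variable [CompleteSpace E]

theorem HasGradientAt.add {f g : E → ℝ} {f' g' x : E} (hf : HasGradientAt f f' x)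
    (hg : HasGradientAt g g' x) : HasGradientAt (fun y => f y + g y) (f' + g') x := by
  rw [hasGradientAt_iff_hasFDerivAt, map_add]
  exact (hasGradientAt_iff_hasFDerivAt.1 hf).add (hasGradientAt_iff_hasFDerivAt.1 hg)

theorem hasGradientAt_of_abs_sub_inner_le {φ : E → ℝ} {x G : E} {C : ℝ}
    (h : ∀ y, |φ y - φ x - ⟪G, y - x⟫| ≤ C * ‖y - x‖ ^ 2) : HasGradientAt φ G x := by
  rw [hasGradientAt_iff_isLittleO]
  refine (Asymptotics.IsBigO.of_bound C (Filter.Eventually.of_forall fun y => ?_)).trans_isLittleO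
    (Asymptotics.isLittleO_pow_sub_sub x one_lt_two)
  simpa only [Real.norm_eq_abs, abs_pow, abs_norm] using h y

theorem hasGradientAt_mul_sq_posPart_norm_sub {c : ℝ} (hc : 0 ≤ c) (L : ℝ) (x₀ x : E) :
    HasGradientAt (fun y => L * max (‖y - x₀‖ - c) 0 ^ 2)
      ((2 * L) • ((x - x₀) - projBall c (x - x₀))) x := by
  refine hasGradientAt_of_abs_sub_inner_le (C := |L|) fun y => ?_
  have h := abs_norm_sub_projBall_sq_sub_le hc (x - x₀) (y - x₀)
  rw [sub_sub_sub_cancel_right] at h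
  simp only [← norm_sub_projBall hc, real_inner_smul_left]
  have hL := mul_le_mul_of_nonneg_left h (abs_nonneg L)
  rw [← abs_mul] at hL
  refine Eq.trans_le ?_ hL
  congr 1
  ring

theorem add_inner_gradient_sub_le_of_neg_mul_sq_le_inner {g : E → ℝ} {K : ℝ}
    (hg : Differentiable ℝ g)
    (hmono : ∀ a b, -K * ‖b - a‖ ^ 2 ≤ ⟪gradient g b - gradient g a, b - a⟫) (a b : E) :
    g a + ⟪gradient g a, b - a⟫ - K / 2 * ‖b - a‖ ^ 2 ≤ g b := by
  set v := b - a
  have hderiv : ∀ t : ℝ, HasDerivAt (fun s : ℝ => g (a + s • v)) ⟪gradient g (a + t • v), v⟫ t :=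
    fun t => by rw [inner_gradient_left]; exact hasDerivAt_comp_add_smul (hg _).hasFDerivAt
  have hle : ∀ t ∈ Ioo (0 : ℝ) 1,
      ⟪gradient g a, v⟫ + -K * ‖v‖ ^ 2 * t ≤ ⟪gradient g (a + t • v), v⟫ := by
    intro t ht
    have h := hmono a (a + t • v)
    rw [add_sub_cancel_left, norm_smul, Real.norm_of_nonneg ht.1.le, real_inner_smul_right,
      inner_sub_left] at h
    nlinarith [ht.1]
  have := add_div_two_le_sub_of_hasDerivAt hderiv hle
  simp only [one_smul, zero_smul, add_zero, v, add_sub_cancel] at this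
  linarith

theorem neg_mul_sq_le_inner_gradient_sub_of_hessian {f : E → ℝ} {α L : ℝ} {x₀ : E}
    (hL : 0 ≤ L) (hfd : Differentiable ℝ (gradient f))
    (hH : ∀ x, ‖fderiv ℝ (gradient f) x - fderiv ℝ (gradient f) x₀‖ ≤ L * ‖x - x₀‖)
    (h₀ : ∀ u, -α * ‖u‖ ^ 2 ≤ ⟪fderiv ℝ (gradient f) x₀ u, u⟫) (a b : E) :
    -(α + L * (‖a - x₀‖ + ‖b - x₀‖) / 2) * ‖b - a‖ ^ 2
      ≤ ⟪gradient f b - gradient f a, b - a⟫ := by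
  set v := b - a
  have hderiv : ∀ t : ℝ, HasDerivAt (fun s : ℝ => ⟪gradient f (a + s • v), v⟫)
      ⟪fderiv ℝ (gradient f) (a + t • v) v, v⟫ t := fun t => by
    simpa using (hasDerivAt_comp_add_smul (hfd _).hasFDerivAt).inner ℝ (hasDerivAt_const t v)
  have hseg : ∀ t ∈ Ioo (0 : ℝ) 1, ‖a + t • v - x₀‖ ≤ (1 - t) * ‖a - x₀‖ + t * ‖b - x₀‖ := by
    intro t ht
    have heq : a + t • v - x₀ = (1 - t) • (a - x₀) + t • (b - x₀) := by simp only [v]; module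
    rw [heq]
    refine (norm_add_le _ _).trans_eq ?_
    rw [norm_smul, norm_smul, Real.norm_of_nonneg (by linarith [ht.2]),
      Real.norm_of_nonneg ht.1.le]
  have hle : ∀ t ∈ Ioo (0 : ℝ) 1, -(α + L * ‖a - x₀‖) * ‖v‖ ^ 2
      + -(L * (‖b - x₀‖ - ‖a - x₀‖)) * ‖v‖ ^ 2 * t ≤ ⟪fderiv ℝ (gradient f) (a + t • v) v, v⟫ := by
    intro t ht
    have h := neg_add_mul_sq_le_inner_apply h₀ (hH (a + t • v)) v
    have := mul_le_mul_of_nonneg_left (hseg t ht) hL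
    nlinarith [sq_nonneg ‖v‖]
  have := add_div_two_le_sub_of_hasDerivAt hderiv hle
  simp only [one_smul, zero_smul, add_zero, v, add_sub_cancel] at this
  rw [inner_sub_left]
  linarith

theorem ContDiff.differentiable_gradient {f : E → ℝ} (hf : ContDiff ℝ 2 f) :
    Differentiable ℝ (gradient f) :=
  (InnerProductSpace.toDual ℝ E).symm.differentiable.comp
    ((hf.fderiv_right (m := 1) le_rfl).differentiable one_ne_zero)

end Gradient

theorem neg_three_mul_sq_le_inner_penalized_sub {G : E → E} {L1 L2 α : ℝ} {x₀ : E}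
    (hL1 : 0 ≤ L1) (hL2 : 0 < L2) (hα : 0 ≤ α)
    (hG₁ : ∀ a b, -L1 * ‖b - a‖ ^ 2 ≤ ⟪G b - G a, b - a⟫)
    (hG₂ : ∀ a b, -(α + L2 * (‖a - x₀‖ + ‖b - x₀‖) / 2) * ‖b - a‖ ^ 2 ≤ ⟪G b - G a, b - a⟫)
    (a b : E) :
    -(3 * α) * ‖b - a‖ ^ 2
      ≤ ⟪(G b + (2 * L1) • ((b - x₀) - projBall (α / L2) (b - x₀)))
          - (G a + (2 * L1) • ((a - x₀) - projBall (α / L2) (a - x₀))), b - a⟫ := by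
  set c := α / L2
  have hc : 0 ≤ c := div_nonneg hα hL2.le
  have hv : (b - x₀) - (a - x₀) = b - a := sub_sub_sub_cancel_right b a x₀
  rw [add_sub_add_comm, ← smul_sub, inner_add_left, real_inner_smul_left]
  rcases le_total (‖b - x₀‖ + ‖a - x₀‖) (4 * c) with hnear | hfar
  · have hQ := inner_sub_projBall_sub_nonneg hc (b - x₀) (a - x₀)
    have hr : L2 * (‖a - x₀‖ + ‖b - x₀‖) ≤ 4 * α := by
      have := mul_le_mul_of_nonneg_left hnear hL2.le
      rwa [mul_left_comm, mul_div_cancel₀ α hL2.ne', add_comm] at this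
    rw [hv] at hQ
    nlinarith [hG₂ a b, sq_nonneg ‖b - a‖]
  · have hQ := norm_sub_sq_div_two_le_inner_sub_projBall_sub hc hfar
    rw [hv] at hQ
    nlinarith [hG₁ a b, sq_nonneg ‖b - a‖]

theorem norm_penalized_sub_le {G : E → E} {L c : ℝ} {x₀ : E} (hL : 0 ≤ L) (hc : 0 ≤ c)
    (hG : ∀ a b, ‖G a - G b‖ ≤ L * ‖a - b‖) (a b : E) :
    ‖(G a + (2 * L) • ((a - x₀) - projBall c (a - x₀)))
        - (G b + (2 * L) • ((b - x₀) - projBall c (b - x₀)))‖ ≤ 3 * L * ‖a - b‖ := by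
  have hQ := norm_sub_projBall_sub_le hc (a - x₀) (b - x₀)
  rw [sub_sub_sub_cancel_right] at hQ
  rw [add_sub_add_comm, ← smul_sub]
  calc _ ≤ ‖G a - G b‖
          + 2 * L * ‖(a - x₀ - projBall c (a - x₀)) - (b - x₀ - projBall c (b - x₀))‖ := by
        refine (norm_add_le _ _).trans_eq ?_
        rw [norm_smul, Real.norm_of_nonneg (by positivity)]
    _ ≤ L * ‖a - b‖ + 2 * L * ‖a - b‖ := by gcongr; exact hG a b
    _ = 3 * L * ‖a - b‖ := by ring

/-- if `λ_min(∇²f(x₀)) ≥ -α`, then the penalized function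
`g(x) = f(x) + L1·([‖x - x₀‖ - α/L2]_+)²` is `3α`-almost convex and `5L1`-smooth. -/
theorem penalized_function_almost_convex_and_smooth {d : ℕ}
    (f : EuclideanSpace ℝ (Fin d) → ℝ) (L1 L2 α : ℝ)
    (hL1 : 0 < L1) (hL2 : 0 < L2) (hα : 0 ≤ α)
    (hf : ContDiff ℝ 2 f)
    (hglip : ∀ a b : EuclideanSpace ℝ (Fin d),
      ‖gradient f a - gradient f b‖ ≤ L1 * ‖a - b‖)
    (hHlip : ∀ a b : EuclideanSpace ℝ (Fin d),
      ‖fderiv ℝ (gradient f) a - fderiv ℝ (gradient f) b‖ ≤ L2 * ‖a - b‖)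
    (x₀ : EuclideanSpace ℝ (Fin d))
    (hx₀ : ∀ u : EuclideanSpace ℝ (Fin d), ‖u‖ = 1 →
      ⟪(fderiv ℝ (gradient f) x₀) u, u⟫ ≥ -α)
    (g : EuclideanSpace ℝ (Fin d) → ℝ)
    (hg : g = fun z : EuclideanSpace ℝ (Fin d) =>
      f z + L1 * (max (‖z - x₀‖ - α / L2) 0) ^ 2) :
    (∀ a b : EuclideanSpace ℝ (Fin d),
      g b ≥ g a + ⟪gradient g a, b - a⟫ - (3 * α / 2) * ‖b - a‖ ^ 2) ∧
    (∀ a b : EuclideanSpace ℝ (Fin d),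
      ‖gradient g a - gradient g b‖ ≤ 5 * L1 * ‖a - b‖) := by
  have hc : 0 ≤ α / L2 := div_nonneg hα hL2.le
  have hgrad : ∀ z, HasGradientAt g
      (gradient f z + (2 * L1) • ((z - x₀) - projBall (α / L2) (z - x₀))) z := fun z => by
    rw [hg]
    exact ((hf.differentiable two_ne_zero) z).hasGradientAt.add
      (hasGradientAt_mul_sq_posPart_norm_sub hc L1 x₀ z)
  have hgrad_eq : gradient g = fun z =>
      gradient f z + (2 * L1) • ((z - x₀) - projBall (α / L2) (z - x₀)) :=
    funext fun z => (hgrad z).gradient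
  have hmono : ∀ a b, -(3 * α) * ‖b - a‖ ^ 2 ≤ ⟪gradient g b - gradient g a, b - a⟫ := by
    rw [hgrad_eq]
    exact neg_three_mul_sq_le_inner_penalized_sub hL1.le hL2 hα
      (fun a b => neg_mul_sq_le_inner_sub_of_norm_sub_le (hglip b a))
      (neg_mul_sq_le_inner_gradient_sub_of_hessian hL2.le hf.differentiable_gradient
        (fun x => hHlip x x₀) (neg_mul_sq_le_inner_apply_of_unit hx₀))
  refine ⟨fun a b => ?_, fun a b => ?_⟩
  · linarith [add_inner_gradient_sub_le_of_neg_mul_sq_le_inner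
      (fun z => (hgrad z).differentiableAt) hmono a b]
  · rw [hgrad_eq]
    linarith [norm_penalized_sub_le (x₀ := x₀) hL1.le hc hglip a b,
      mul_nonneg hL1.le (norm_nonneg (a - b))]
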